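/- arXiv:0802.0196 — 3 statements merged into one kernel-verified Lean document; each statement's English description precedes it below -/
import Mathlib

section
/- Let p ∈ ℍ, let φ(z) = (z-p)/(z-conj(p)) be the Cayley map ℍ → 𝔻, and let g ∈ SL₂(ℝ) act on ℍ. Set g^φ = φ∘g∘φ⁻¹ ∈ SU(1,1). Then the preimage under φ of the isometric circle I(g^φ) ⊂ 𝔻 equals the perpendicular bisector {z ∈ ℍ : d(z,p) = d(gz,p)} of the geodesic between p and g⁻¹(p), where d is the hyperbolic distance on ℍ. -/
/-!
The Cayley map `φ` sends hyperbolic distance from `p` to the Euclidean norm: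
`tanh (d(z, p) / 2) = |φ z|`, so `d(z, p) = d(g z, p)` iff `|φ z| = |g^φ (φ z)|`.
For `h = [[conj D, conj C], [C, D]]` with `|D|² - |C|² = 1` one has
`|conj D w + conj C|² - |C w + D|² = |w|² - 1`, hence for `|w| < 1` the condition
`|h w| = |w|` reads `(|C w + D|² - 1)(1 - |w|²) = 0`, i.e. `w ∈ I(h)`.
-/

open Complex ComplexConjugate UpperHalfPlane MatrixGroups

namespace UpperHalfPlane

noncomputable def cayley (p z : ℍ) : ℂ := ((z : ℂ) - p) / ((z : ℂ) - conj (p : ℂ))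

theorem tanh_half_dist_eq_norm_cayley (z p : ℍ) :
    Real.tanh (dist z p / 2) = ‖cayley p z‖ := by
  rw [tanh_half_dist, cayley, norm_div, Complex.dist_eq, Complex.dist_eq]

theorem dist_eq_dist_iff_norm_cayley_eq (z w p : ℍ) :
    dist z p = dist w p ↔ ‖cayley p z‖ = ‖cayley p w‖ := by
  rw [← tanh_half_dist_eq_norm_cayley, ← tanh_half_dist_eq_norm_cayley,
    Real.tanh_injective.eq_iff, div_left_inj' two_ne_zero]

theorem norm_cayley_lt_one (p z : ℍ) : ‖cayley p z‖ < 1 := by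
  rw [← tanh_half_dist_eq_norm_cayley]
  exact Real.tanh_lt_one _

end UpperHalfPlane

theorem norm_conj_mul_add_conj_sq_sub_norm_mul_add_sq (C D w : ℂ) :
    ‖conj D * w + conj C‖ ^ 2 - ‖C * w + D‖ ^ 2 = (‖D‖ ^ 2 - ‖C‖ ^ 2) * (‖w‖ ^ 2 - 1) := by
  simp only [← normSq_eq_norm_sq, normSq_apply, add_re, add_im, mul_re, mul_im, conj_re,
    conj_im]
  ring

theorem norm_su11_apply_eq_norm_iff {C D w : ℂ} (hDC : ‖D‖ ^ 2 - ‖C‖ ^ 2 = 1) (hw : ‖w‖ < 1) :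
    ‖(conj D * w + conj C) / (C * w + D)‖ = ‖w‖ ↔ ‖C * w + D‖ = 1 := by
  have hnorm := norm_conj_mul_add_conj_sq_sub_norm_mul_add_sq C D w
  rw [hDC, one_mul] at hnorm
  have hw2 : ‖w‖ ^ 2 < 1 := (sq_lt_one_iff₀ (norm_nonneg w)).mpr hw
  have hden : C * w + D ≠ 0 := by
    rintro hzero
    rw [hzero, norm_zero] at hnorm
    nlinarith [sq_nonneg ‖conj D * w + conj C‖]
  have hr : 1 - ‖w‖ ^ 2 ≠ 0 := (sub_pos.mpr hw2).ne'
  have hfactor : ‖conj D * w + conj C‖ ^ 2 - (‖w‖ * ‖C * w + D‖) ^ 2 =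
      (‖C * w + D‖ ^ 2 - 1) * (1 - ‖w‖ ^ 2) := by
    linear_combination hnorm
  rw [norm_div, div_eq_iff (norm_ne_zero_iff.mpr hden),
    ← sq_eq_sq₀ (norm_nonneg _) (by positivity), ← sub_eq_zero, hfactor,
    mul_eq_zero, or_iff_left hr, sub_eq_zero,
    pow_eq_one_iff_of_nonneg (norm_nonneg _) two_ne_zero]

theorem preimage_isometric_circle_eq_perp_bisector_general
    (p : UpperHalfPlane) (g : SL(2, ℝ)) (A B C D : ℂ)
    (hsu : A = (starRingEnd ℂ) D ∧ B = (starRingEnd ℂ) C)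
    (hdet : A * D - B * C = 1)
    (hconj : ∀ z : UpperHalfPlane,
      (A * (((z : ℂ) - (p : ℂ)) / ((z : ℂ) - (starRingEnd ℂ) (p : ℂ))) + B) /
        (C * (((z : ℂ) - (p : ℂ)) / ((z : ℂ) - (starRingEnd ℂ) (p : ℂ))) + D) =
      (((g • z : UpperHalfPlane) : ℂ) - (p : ℂ)) /
        (((g • z : UpperHalfPlane) : ℂ) - (starRingEnd ℂ) (p : ℂ))) :
    {z : UpperHalfPlane |
        ‖C * (((z : ℂ) - (p : ℂ)) / ((z : ℂ) - (starRingEnd ℂ) (p : ℂ))) + D‖ = 1} =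
      {z : UpperHalfPlane | dist z p = dist (g • z) p} := by
  obtain ⟨rfl, rfl⟩ := hsu
  have hDC : ‖D‖ ^ 2 - ‖C‖ ^ 2 = 1 := by
    rw [conj_mul', conj_mul'] at hdet
    exact_mod_cast hdet
  have hconj' (z : ℍ) :
      cayley p (g • z) = (conj D * cayley p z + conj C) / (C * cayley p z + D) :=
    (hconj z).symm
  ext z
  change ‖C * cayley p z + D‖ = 1 ↔ dist z p = dist (g • z) p
  rw [dist_eq_dist_iff_norm_cayley_eq, hconj',
    ← norm_su11_apply_eq_norm_iff hDC (norm_cayley_lt_one p z), eq_comm]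

/-- Let `φ(z) = (z-p)/(z - conj p)` be the Cayley map `ℍ → 𝔻`, let
`g ∈ SL₂(ℝ)` act on `ℍ`, and let `h = [[A,B],[C,D]] ∈ SU(1,1)` (with `C ≠ 0`) be
`g^φ = φ ∘ g ∘ φ⁻¹`.  Then the preimage under `φ` of the isometric circle
`I(g^φ) = {w : |Cw + D| = 1}` is the perpendicular bisector
`{z ∈ ℍ : d(z,p) = d(gz,p)}`, where `d` is the hyperbolic distance on `ℍ`. -/
theorem preimage_isometric_circle_eq_perp_bisector
    (p : UpperHalfPlane) (g : SL(2, ℝ)) (A B C D : ℂ)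
    (hsu : A = (starRingEnd ℂ) D ∧ B = (starRingEnd ℂ) C)
    (hdet : A * D - B * C = 1) (hC : C ≠ 0)
    (hconj : ∀ z : UpperHalfPlane,
      (A * (((z : ℂ) - (p : ℂ)) / ((z : ℂ) - (starRingEnd ℂ) (p : ℂ))) + B) /
        (C * (((z : ℂ) - (p : ℂ)) / ((z : ℂ) - (starRingEnd ℂ) (p : ℂ))) + D) =
      (((g • z : UpperHalfPlane) : ℂ) - (p : ℂ)) /
        (((g • z : UpperHalfPlane) : ℂ) - (starRingEnd ℂ) (p : ℂ))) :
    {z : UpperHalfPlane |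
        ‖C * (((z : ℂ) - (p : ℂ)) / ((z : ℂ) - (starRingEnd ℂ) (p : ℂ))) + D‖ = 1} =
      {z : UpperHalfPlane | dist z p = dist (g • z) p} :=
  preimage_isometric_circle_eq_perp_bisector_general p g A B C D hsu hdet hconj
end

section
/- Let p = x + yi with y > 0, let g = [[a,b],[c,d]] ∈ SL₂(ℝ) with g(p) ≠ p, and let f_g(t) = ct² + (d-a)t - b. Then the radius of the isometric circle of g^φ = φgφ⁻¹ ∈ SU(1,1) (where φ(z) = (z-p)/(z-conj(p))) equals 2y/|f_g(p)|. -/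
/-!
Since `φ(p) = 0`, evaluating the conjugation relation at `p` gives `h(0) = B / D = φ(g p)`.
For `h ∈ SU(1,1)` the modulus `|B / D| = |C| / |D|` together with `|D|² - |C|² = 1` determines
`|C|`. On the other side `g p - p = -f_g(p) / (c p + d)` and `Im (g p) = y / |c p + d|²`, while
`|w - p̄|² - |w - p|² = 4 Im p Im w`; combining the two gives `|C| · 2y = |f_g(p)|`.
-/

open Complex ComplexConjugate

namespace Complex

theorem normSq_sub_conj_sub_normSq_sub (w p : ℂ) :
    normSq (w - conj p) - normSq (w - p) = 4 * p.im * w.im := by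
  simp only [normSq_apply, sub_re, sub_im, conj_re, conj_im]
  ring

theorem normSq_lower_right_eq_one_add {A B C D : ℂ} (hA : A = conj D) (hB : B = conj C)
    (hdet : A * D - B * C = 1) : normSq D = 1 + normSq C := by
  have h : ((normSq D - normSq C : ℝ) : ℂ) = 1 := by
    push_cast
    rw [← mul_conj, ← mul_conj]
    linear_combination hdet - hA * D + C * hB
  have h' : normSq D - normSq C = 1 := by exact_mod_cast h
  linarith

theorem normSq_lower_left_mul_of_div_eq {A B C D : ℂ} (hA : A = conj D) (hB : B = conj C)
    (hdet : A * D - B * C = 1) {X Y : ℂ} (hY : Y ≠ 0) (h0 : B / D = X / Y) :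
    normSq C * (normSq Y - normSq X) = normSq X := by
  have hD := normSq_lower_right_eq_one_add hA hB hdet
  have hD0 : D ≠ 0 := by
    rw [← normSq_pos]
    linarith [normSq_nonneg C]
  have hcross : normSq B * normSq Y = normSq X * normSq D := by
    rw [← map_mul, ← map_mul, (div_eq_div_iff hD0 hY).mp h0]
  rw [hB, normSq_conj, hD] at hcross
  linear_combination hcross

theorem mul_add_ne_zero_of_im_ne_zero {c d : ℝ} (hcd : (c, d) ≠ (0, 0)) {z : ℂ}
    (hz : z.im ≠ 0) : (c : ℂ) * z + d ≠ 0 := by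
  intro h
  have hre := congrArg re h
  have him := congrArg im h
  simp only [add_re, add_im, re_ofReal_mul, im_ofReal_mul, ofReal_re, ofReal_im,
    zero_re, zero_im, add_zero] at hre him
  obtain rfl : c = 0 := (mul_eq_zero.mp him).resolve_right hz
  obtain rfl : d = 0 := by simpa using hre
  exact hcd rfl

theorem im_moebius {a b c d : ℝ} (hdet : a * d - b * c = 1) (z : ℂ) :
    (((a : ℂ) * z + b) / ((c : ℂ) * z + d)).im = z.im / normSq ((c : ℂ) * z + d) := by
  rw [div_im, div_sub_div_same]
  congr 1
  simp only [add_re, add_im, re_ofReal_mul, im_ofReal_mul, ofReal_re, ofReal_im]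
  linear_combination z.im * hdet

theorem moebius_sub_self {a b c d z : ℂ} (hz : c * z + d ≠ 0) :
    (a * z + b) / (c * z + d) - z = -(c * z ^ 2 + (d - a) * z - b) / (c * z + d) := by
  rw [eq_div_iff hz, sub_mul, div_mul_cancel₀ _ hz]
  ring

end Complex

theorem isometric_circle_radius_general (x y : ℝ) (hy : 0 < y) (a b c d : ℝ)
    (hdetg : a * d - b * c = 1) (A B C D : ℂ)
    (hsu : A = (starRingEnd ℂ) D ∧ B = (starRingEnd ℂ) C)
    (hdet : A * D - B * C = 1)
    (hconj : ∀ z : ℂ, 0 < z.im →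
      (A * ((z - ((x : ℂ) + y * Complex.I)) /
          (z - (starRingEnd ℂ) ((x : ℂ) + y * Complex.I))) + B) /
        (C * ((z - ((x : ℂ) + y * Complex.I)) /
          (z - (starRingEnd ℂ) ((x : ℂ) + y * Complex.I))) + D) =
      (((a : ℂ) * z + b) / ((c : ℂ) * z + d) - ((x : ℂ) + y * Complex.I)) /
        (((a : ℂ) * z + b) / ((c : ℂ) * z + d) - (starRingEnd ℂ) ((x : ℂ) + y * Complex.I))) :
    ‖C‖⁻¹ =
      2 * y / ‖
        ((c : ℂ) * ((x : ℂ) + y * Complex.I) ^ 2 +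
          ((d : ℂ) - a) * ((x : ℂ) + y * Complex.I) - b)‖ := by
  set p : ℂ := (x : ℂ) + y * I
  set w : ℂ := ((a : ℂ) * p + b) / ((c : ℂ) * p + d)
  have hp : p.im = y := by simp [p]
  have hcd : (c, d) ≠ (0, 0) := by
    rintro ⟨⟩
    simp at hdetg
  have he : (c : ℂ) * p + d ≠ 0 := mul_add_ne_zero_of_im_ne_zero hcd (by rw [hp]; exact hy.ne')
  have hN : 0 < normSq ((c : ℂ) * p + d) := normSq_pos.mpr he
  have hw : w.im = y / normSq ((c : ℂ) * p + d) := by rw [im_moebius hdetg, hp]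
  have hY : w - conj p ≠ 0 := by
    have : 0 < (w - conj p).im := by
      rw [sub_im, conj_im, sub_neg_eq_add, hw, hp]
      positivity
    exact ne_of_apply_ne im this.ne'
  have h0 : B / D = (w - p) / (w - conj p) := by simpa using hconj p (by rw [hp]; exact hy)
  have key := normSq_lower_left_mul_of_div_eq hsu.1 hsu.2 hdet hY h0
  rw [normSq_sub_conj_sub_normSq_sub, hw, hp, moebius_sub_self he, normSq_div, normSq_neg] at key
  have hsq : (‖C‖ * (2 * y)) ^ 2 = ‖(c : ℂ) * p ^ 2 + ((d : ℂ) - a) * p - b‖ ^ 2 := by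
    rw [eq_div_iff hN.ne'] at key
    rw [← normSq_eq_norm_sq, ← key, normSq_eq_norm_sq]
    field_simp
    ring
  rw [pow_left_inj₀ (by positivity) (norm_nonneg _) two_ne_zero] at hsq
  rw [← hsq, div_mul_cancel_right₀ (by positivity : 2 * y ≠ 0)]

/-- Let `p = x + yi` with `y > 0`, let `g = [[a,b],[c,d]] ∈ SL₂(ℝ)` with
`g(p) ≠ p`, and let `f_g(t) = ct² + (d-a)t - b`.  If `h = [[A,B],[C,D]] ∈ SU(1,1)` is
`g^φ = φgφ⁻¹`, where `φ(z) = (z-p)/(z - conj p)`, then the radius `1/|C|` of the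
isometric circle of `g^φ` equals `2y/|f_g(p)|`. -/
theorem isometric_circle_radius (x y : ℝ) (hy : 0 < y) (a b c d : ℝ)
    (hdetg : a * d - b * c = 1) (A B C D : ℂ)
    (hsu : A = (starRingEnd ℂ) D ∧ B = (starRingEnd ℂ) C)
    (hdet : A * D - B * C = 1)
    (hgp : ((a : ℂ) * (x + y * Complex.I) + b) / ((c : ℂ) * (x + y * Complex.I) + d) ≠
      (x : ℂ) + y * Complex.I)
    (hconj : ∀ z : ℂ, 0 < z.im →
      (A * ((z - ((x : ℂ) + y * Complex.I)) /
          (z - (starRingEnd ℂ) ((x : ℂ) + y * Complex.I))) + B) /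
        (C * ((z - ((x : ℂ) + y * Complex.I)) /
          (z - (starRingEnd ℂ) ((x : ℂ) + y * Complex.I))) + D) =
      (((a : ℂ) * z + b) / ((c : ℂ) * z + d) - ((x : ℂ) + y * Complex.I)) /
        (((a : ℂ) * z + b) / ((c : ℂ) * z + d) - (starRingEnd ℂ) ((x : ℂ) + y * Complex.I))) :
    ‖C‖⁻¹ =
      2 * y / ‖
        ((c : ℂ) * ((x : ℂ) + y * Complex.I) ^ 2 +
          ((d : ℂ) - a) * ((x : ℂ) + y * Complex.I) - b)‖ :=
  isometric_circle_radius_general x y hy a b c d hdetg A B C D hsu hdet hconj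
end

section
/- Let F be a totally real number field of degree n, let B be a quaternion algebra over F split at exactly one real place v (with the other n-1 real places ramified), and let p = x + yi ∈ ℍ. Then the absolute reduced norm N : B → ℝ defined by N(g) = |f_{ι(g)}(p)|² + 2y²·Tr_{F/ℚ}(nrd(g)) is a positive definite quadratic form on B viewed as a ℚ-vector space of dimension 4n, where ι : B → M₂(ℝ) is the embedding at the split place and f_{[[a,b],[c,d]]}(t) = ct² + (d-a)t - b. -/
open Complex

/-- The reduced norm of a quaternion `γ = x + yα + zβ + wαβ` in `(h,k | F)`. -/
def quatNrd {F : Type*} [Field F] (h k : F) (γ : QuaternionAlgebra F h 0 k) : F :=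
  γ.re ^ 2 - h * γ.imI ^ 2 - k * γ.imJ ^ 2 + h * k * γ.imK ^ 2

/-- The absolute reduced norm `N(g) = |f_{ι(g)}(p)|² + 2y²·Tr_{F/ℚ}(nrd g)` with
respect to `p = x + yi`, where `f_{[[a,b],[c,d]]}(t) = ct² + (d-a)t - b`. -/
noncomputable def absRedNorm {F : Type*} [Field F] [Algebra ℚ F] (h k : F)
    (ι : QuaternionAlgebra F h 0 k →+* Matrix (Fin 2) (Fin 2) ℝ) (x y : ℝ)
    (g : QuaternionAlgebra F h 0 k) : ℝ :=
  ‖(((ι g) 1 0 : ℂ) * ((x : ℂ) + y * Complex.I) ^ 2 +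
      (((ι g) 1 1 : ℂ) - ((ι g) 0 0 : ℂ)) * ((x : ℂ) + y * Complex.I) - ((ι g) 0 1 : ℂ))‖ ^ 2 +
    2 * y ^ 2 * ((Algebra.trace ℚ F (quatNrd h k g) : ℚ) : ℝ)

namespace Matrix

/-- The paper's `f_M`; it vanishes exactly at the fixed points of the Möbius transformation
`t ↦ (at+b)/(ct+d)` of `M = [[a,b],[c,d]]`. -/
def fixedPointPoly (M : Matrix (Fin 2) (Fin 2) ℝ) (t : ℂ) : ℂ :=
  (M 1 0 : ℂ) * t ^ 2 + ((M 1 1 : ℂ) - M 0 0) * t - M 0 1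

noncomputable def invrad (M : Matrix (Fin 2) (Fin 2) ℝ) (p : ℂ) : ℝ :=
  ‖fixedPointPoly M p‖ ^ 2 + 2 * p.im ^ 2 * M.det

theorem fixedPointPoly_smul (r : ℝ) (M : Matrix (Fin 2) (Fin 2) ℝ) (t : ℂ) :
    fixedPointPoly (r • M) t = r * fixedPointPoly M t := by
  simp only [fixedPointPoly, smul_apply, smul_eq_mul, ofReal_mul]
  ring

theorem two_mul_invrad (M : Matrix (Fin 2) (Fin 2) ℝ) (p : ℂ) :
    2 * invrad M p =
      (M 1 0 * (p.re ^ 2 - p.im ^ 2) + (M 1 1 - M 0 0) * p.re - M 0 1) ^ 2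
        + (M 1 0 * (p.re ^ 2 + p.im ^ 2) + (M 1 1 - M 0 0) * p.re - M 0 1) ^ 2
        + p.im ^ 2 * (2 * M 1 0 * p.re + M 1 1 - M 0 0) ^ 2
        + p.im ^ 2 * (M 1 1 + M 0 0) ^ 2 := by
  rw [invrad, fixedPointPoly, Complex.sq_norm, normSq_apply, det_fin_two]
  simp only [pow_two, add_re, add_im, sub_re, sub_im, mul_re, mul_im, ofReal_re, ofReal_im]
  ring

theorem invrad_nonneg (M : Matrix (Fin 2) (Fin 2) ℝ) (p : ℂ) : 0 ≤ invrad M p := by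
  have := two_mul_invrad M p
  nlinarith [sq_nonneg p.im]

/-- The first two squares of `two_mul_invrad` differ by `2c·im(p)²`, which kills `c`; then
`d - a = d + a = 0` and `b = 0`. -/
theorem invrad_pos {M : Matrix (Fin 2) (Fin 2) ℝ} {p : ℂ} (hp : p.im ≠ 0) (hM : M ≠ 0) :
    0 < invrad M p := by
  refine (invrad_nonneg M p).lt_of_ne fun h0 => hM ?_
  have hsum := two_mul_invrad M p
  rw [← h0, mul_zero] at hsum
  have hy : 0 < p.im ^ 2 := by positivity
  set a := M 0 0; set b := M 0 1; set c := M 1 0; set d := M 1 1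
  set x := p.re; set y := p.im
  have hs₁ := sq_nonneg (c * (x ^ 2 - y ^ 2) + (d - a) * x - b)
  have hs₂ := sq_nonneg (c * (x ^ 2 + y ^ 2) + (d - a) * x - b)
  have hs₃ := mul_nonneg hy.le (sq_nonneg (2 * c * x + d - a))
  have hs₄ := mul_nonneg hy.le (sq_nonneg (d + a))
  have e₁ : c * (x ^ 2 - y ^ 2) + (d - a) * x - b = 0 :=
    pow_eq_zero_iff two_ne_zero |>.mp (by linarith)
  have e₂ : c * (x ^ 2 + y ^ 2) + (d - a) * x - b = 0 :=
    pow_eq_zero_iff two_ne_zero |>.mp (by linarith)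
  have e₃ : 2 * c * x + d - a = 0 :=
    pow_eq_zero_iff two_ne_zero |>.mp ((mul_eq_zero.mp (by linarith)).resolve_left hy.ne')
  have e₄ : d + a = 0 :=
    pow_eq_zero_iff two_ne_zero |>.mp ((mul_eq_zero.mp (by linarith)).resolve_left hy.ne')
  have hc : c = 0 := (mul_eq_zero.mp (by linarith : c * y ^ 2 = 0)).resolve_right hy.ne'
  rw [hc] at e₁ e₃
  have ha : a = 0 := by linarith
  have hd : d = 0 := by linarith
  have hb : b = 0 := by rw [ha, hd] at e₁; linarith
  ext i j
  fin_cases i <;> fin_cases j <;> assumption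

end Matrix

open Matrix

section Quaternion

variable {F : Type*} [Field F] (h k : F)

theorem quatNrd_smul {S : Type*} [CommSemiring S] [Algebra S F] (s : S)
    (g : QuaternionAlgebra F h 0 k) : quatNrd h k (s • g) = s ^ 2 • quatNrd h k g := by
  simp only [quatNrd, QuaternionAlgebra.re_smul, QuaternionAlgebra.imI_smul,
    QuaternionAlgebra.imJ_smul, QuaternionAlgebra.imK_smul]
  simp only [Algebra.smul_def, map_pow]
  ring

theorem finrank_quaternionAlgebra (K : Type*) [Field K] [Algebra K F] (a b c : F) :
    Module.finrank K (QuaternionAlgebra F a b c) = 4 * Module.finrank K F := by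
  rw [← Module.finrank_mul_finrank K F, QuaternionAlgebra.finrank_eq_four, mul_comm]

variable [Algebra ℚ F] (ι : QuaternionAlgebra F h 0 k →+* Matrix (Fin 2) (Fin 2) ℝ) (x y : ℝ)

theorem absRedNorm_eq (g : QuaternionAlgebra F h 0 k) :
    absRedNorm h k ι x y g = ‖fixedPointPoly (ι g) (x + y * I)‖ ^ 2
      + 2 * y ^ 2 * ((Algebra.trace ℚ F (quatNrd h k g) : ℚ) : ℝ) :=
  rfl

theorem absRedNorm_rat_smul (q : ℚ) (g : QuaternionAlgebra F h 0 k) :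
    absRedNorm h k ι x y (q • g) = (q : ℝ) ^ 2 * absRedNorm h k ι x y g := by
  have hι : ι (q • g) = (q : ℝ) • ι g := by rw [map_rat_smul, Rat.cast_smul_eq_qsmul]
  rw [absRedNorm_eq, absRedNorm_eq, hι, fixedPointPoly_smul, quatNrd_smul, map_smul,
    smul_eq_mul, norm_mul, norm_real, Real.norm_eq_abs, mul_pow, sq_abs]
  push_cast
  ring

theorem absRedNorm_eq_invrad_add_sum {n : ℕ} (v : F →+* ℝ) (w : Fin n → (F →+* ℝ))
    (htr : ∀ a : F, ((Algebra.trace ℚ F a : ℚ) : ℝ) = v a + ∑ i, w i a)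
    (hdet : ∀ g : QuaternionAlgebra F h 0 k, (ι g).det = v (quatNrd h k g))
    (g : QuaternionAlgebra F h 0 k) :
    absRedNorm h k ι x y g = invrad (ι g) (x + y * I) + 2 * y ^ 2 * ∑ i, w i (quatNrd h k g) := by
  have him : ((x : ℂ) + y * I).im = y := by simp
  rw [absRedNorm_eq, invrad, him, hdet, htr]
  ring

end Quaternion

theorem absRedNorm_positive_definite_general (F : Type) [Field F] [Algebra ℚ F]
    (h k : F)
    (x y : ℝ) (hy : 0 < y)
    (v : F →+* ℝ) (w : Fin (Module.finrank ℚ F - 1) → (F →+* ℝ))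
    (htr : ∀ a : F, ((Algebra.trace ℚ F a : ℚ) : ℝ) = v a + ∑ i, w i a)
    (ι : QuaternionAlgebra F h 0 k →+* Matrix (Fin 2) (Fin 2) ℝ)
    (hι : Function.Injective ι)
    (hdet : ∀ g : QuaternionAlgebra F h 0 k, (ι g).det = v (quatNrd h k g))
    (hram : ∀ (i : Fin (Module.finrank ℚ F - 1)) (g : QuaternionAlgebra F h 0 k),
      g ≠ 0 → 0 < w i (quatNrd h k g)) :
    (∀ g : QuaternionAlgebra F h 0 k, 0 ≤ absRedNorm h k ι x y g) ∧
    (∀ g : QuaternionAlgebra F h 0 k, absRedNorm h k ι x y g = 0 ↔ g = 0) ∧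
    (∀ (q : ℚ) (g : QuaternionAlgebra F h 0 k),
      absRedNorm h k ι x y (q • g) = (q : ℝ) ^ 2 * absRedNorm h k ι x y g) ∧
    Module.finrank ℚ (QuaternionAlgebra F h 0 k) = 4 * Module.finrank ℚ F := by
  have hzero : absRedNorm h k ι x y 0 = 0 := by simp [absRedNorm, quatNrd]
  have hpos (g : QuaternionAlgebra F h 0 k) (hg : g ≠ 0) : 0 < absRedNorm h k ι x y g := by
    rw [absRedNorm_eq_invrad_add_sum h k ι x y v w htr hdet]
    have hsplit : 0 < invrad (ι g) (x + y * I) :=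
      invrad_pos (by simpa using hy.ne') ((map_ne_zero_iff ι hι).mpr hg)
    have hramified : 0 ≤ ∑ i, w i (quatNrd h k g) := Finset.sum_nonneg fun i _ => (hram i g hg).le
    positivity
  refine ⟨fun g => ?_, fun g => ⟨fun hN => ?_, fun hg => hg ▸ hzero⟩,
    absRedNorm_rat_smul h k ι x y, finrank_quaternionAlgebra ℚ h 0 k⟩
  · rcases eq_or_ne g 0 with rfl | hg
    exacts [hzero.ge, (hpos g hg).le]
  · by_contra hg
    exact (hpos g hg).ne' hN

/-- Let `F` be a totally real number field of degree `n` and `B = (h,k|F)`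
a quaternion algebra split at exactly one real place `v` (embedding `ι : B → M₂(ℝ)`,
with `det (ι g) = v(nrd g)`) and ramified at the remaining `n-1` real places `w i`
(where the reduced norm is positive definite).  For `p = x + yi ∈ ℍ`, the absolute
reduced norm `N(g) = |f_{ι(g)}(p)|² + 2y²·Tr_{F/ℚ}(nrd g)` is a positive definite
quadratic form on `B` viewed as a `ℚ`-vector space of dimension `4n`. -/
theorem absRedNorm_positive_definite (F : Type) [Field F] [Algebra ℚ F]
    [FiniteDimensional ℚ F] (h k : F) (hh : h ≠ 0) (hk : k ≠ 0)
    (x y : ℝ) (hy : 0 < y)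
    (v : F →+* ℝ) (w : Fin (Module.finrank ℚ F - 1) → (F →+* ℝ))
    (htr : ∀ a : F, ((Algebra.trace ℚ F a : ℚ) : ℝ) = v a + ∑ i, w i a)
    (ι : QuaternionAlgebra F h 0 k →+* Matrix (Fin 2) (Fin 2) ℝ)
    (hι : Function.Injective ι)
    (hdet : ∀ g : QuaternionAlgebra F h 0 k, (ι g).det = v (quatNrd h k g))
    (hram : ∀ (i : Fin (Module.finrank ℚ F - 1)) (g : QuaternionAlgebra F h 0 k),
      g ≠ 0 → 0 < w i (quatNrd h k g)) :
    (∀ g : QuaternionAlgebra F h 0 k, 0 ≤ absRedNorm h k ι x y g) ∧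
    (∀ g : QuaternionAlgebra F h 0 k, absRedNorm h k ι x y g = 0 ↔ g = 0) ∧
    (∀ (q : ℚ) (g : QuaternionAlgebra F h 0 k),
      absRedNorm h k ι x y (q • g) = (q : ℝ) ^ 2 * absRedNorm h k ι x y g) ∧
    Module.finrank ℚ (QuaternionAlgebra F h 0 k) = 4 * Module.finrank ℚ F :=
  absRedNorm_positive_definite_general F h k x y hy v w htr ι hι hdet hram
end
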